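/- arXiv:1902.05224 — 2 statements merged into one kernel-verified Lean document; each statement's English description precedes it below -/
import Mathlib

section
/- For every character c and every integer x with 1 ≤ x ≤ rank(L,c,n), letting s = pred((V_c[1],…,V_c[run(c)]), x), the position of the x-th occurrence of c in L equals B_c[s] + x − V_c[s]; that is, select(L,c,x) = B_c[s] + x − V_c[s]. -/
/-- `rank(L,c,i)`: the number of occurrences of the character `c` in `L[1..i]`. -/
def rankL {α : Type*} [DecidableEq α] (L : ℕ → α) (c : α) (i : ℕ) : ℕ :=
  ((Finset.Icc 1 i).filter (fun j => L j = c)).card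

/-- `pred(S,x)` for the strictly increasing sequence `S[1..r]`: the number of
entries of `S` that are at most `x`. -/
def predCount (S : ℕ → ℕ) (r x : ℕ) : ℕ :=
  ((Finset.Icc 1 r).filter (fun i => S i ≤ x)).card

/-- `select(L,c,x)`: the position of the `x`-th occurrence of the character `c`
in `L`, i.e. the least position `j` with `rank(L,c,j) ≥ x`. -/
noncomputable def selectPos {α : Type*} [DecidableEq α] (L : ℕ → α) (c : α) (x : ℕ) : ℕ :=
  sInf {j | x ≤ rankL L c j}

section auxLemmas
variable {α : Type*} [DecidableEq α]

lemma rankL_eq_Ioc (L : ℕ → α) (c : α) (i : ℕ) :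
    rankL L c i = ((Finset.Ioc 0 i).filter (fun j => L j = c)).card := rfl

lemma rankL_mono (L : ℕ → α) (c : α) {i j : ℕ} (h : i ≤ j) :
    rankL L c i ≤ rankL L c j :=
  Finset.card_le_card (Finset.filter_subset_filter _ (Finset.Icc_subset_Icc_right h))

lemma rankL_split (L : ℕ → α) (c : α) {a b : ℕ} (h : a ≤ b) :
    rankL L c b = rankL L c a + ((Finset.Ioc a b).filter (fun j => L j = c)).card := by
  rw [rankL_eq_Ioc, rankL_eq_Ioc,
    ← Finset.Ioc_union_Ioc_eq_Ioc (Nat.zero_le a) h, Finset.filter_union,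
    Finset.card_union_of_disjoint]
  refine Finset.disjoint_filter_filter (Finset.disjoint_left.mpr ?_)
  intro k hk hk'
  simp only [Finset.mem_Ioc] at hk hk'
  omega

lemma rankL_le_add (L : ℕ → α) (c : α) {a b : ℕ} (h : a ≤ b) :
    rankL L c b ≤ rankL L c a + (b - a) := by
  rw [rankL_split L c h]
  have := Finset.card_filter_le (Finset.Ioc a b) (fun j => L j = c)
  rw [Nat.card_Ioc] at this
  omega

lemma rankL_of_no_c (L : ℕ → α) (c : α) {a b : ℕ} (h : a ≤ b)
    (hno : ∀ j, a < j → j ≤ b → L j ≠ c) : rankL L c b = rankL L c a := by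
  rw [rankL_split L c h]
  have : (Finset.Ioc a b).filter (fun j => L j = c) = ∅ := by
    refine Finset.filter_eq_empty_iff.mpr ?_
    intro j hj
    rw [Finset.mem_Ioc] at hj
    exact hno j hj.1 hj.2
  rw [this]
  simp

lemma rankL_of_all_c (L : ℕ → α) (c : α) {a b : ℕ} (h : a ≤ b)
    (hall : ∀ j, a < j → j ≤ b → L j = c) : rankL L c b = rankL L c a + (b - a) := by
  rw [rankL_split L c h]
  have : (Finset.Ioc a b).filter (fun j => L j = c) = Finset.Ioc a b := by
    refine Finset.filter_eq_self.mpr ?_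
    intro j hj
    rw [Finset.mem_Ioc] at hj
    exact hall j hj.1 hj.2
  rw [this, Nat.card_Ioc]

lemma rankL_pos_of_c (L : ℕ → α) (c : α) {j : ℕ} (hj : 1 ≤ j) (hc : L j = c) :
    rankL L c j = rankL L c (j - 1) + 1 := by
  rw [rankL_split L c (Nat.sub_le j 1)]
  congr 1
  have hIoc : Finset.Ioc (j - 1) j = {j} := by
    ext k
    simp only [Finset.mem_Ioc, Finset.mem_singleton]
    omega
  rw [hIoc, Finset.filter_singleton, if_pos hc]
  simp

end auxLemmas

/-- For every character `c` and every integer `x` with `1 ≤ x ≤ rank(L,c,n)`,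
letting `s = pred((V_c[1],…,V_c[run(c)]), x)`, the position of the `x`-th
occurrence of `c` in `L` equals `B_c[s] + x − V_c[s]`. -/
theorem stmt16 {α : Type*} [DecidableEq α]
    (n : ℕ) (hn : 1 ≤ n) (L : ℕ → α) (c : α)
    -- `B 1 < ⋯ < B rc` are the starting positions of the maximal runs of `c`
    -- in `L[1..n]`
    (rc : ℕ) (B V : ℕ → ℕ)
    (hBmono : ∀ i j, 1 ≤ i → i < j → j ≤ rc → B i < B j)
    (hBrun : ∀ i, 1 ≤ i → i ≤ rc →
      1 ≤ B i ∧ B i ≤ n ∧ L (B i) = c ∧ (B i = 1 ∨ L (B i - 1) ≠ c))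
    (hBall : ∀ x, 1 ≤ x → x ≤ n → L x = c → (x = 1 ∨ L (x - 1) ≠ c) →
      ∃ i, 1 ≤ i ∧ i ≤ rc ∧ B i = x)
    -- `V i = rank(L, c, B i)` and `V (rc+1) = rank(L,c,n) + 1`
    (hV : ∀ i, 1 ≤ i → i ≤ rc → V i = rankL L c (B i))
    (hVend : V (rc + 1) = rankL L c n + 1)
    :
    ∀ x, 1 ≤ x → x ≤ rankL L c n →
      selectPos L c x =
        B (predCount V rc x) + (x - V (predCount V rc x)) := by
  intro x hx1 hxn
  set F : Finset ℕ := (Finset.Icc 1 rc).filter (fun i => V i ≤ x) with hF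
  set s : ℕ := predCount V rc x with hsdef
  have hcard : F.card = s := rfl
  -- V is strictly monotone on [1, rc]
  have hVmono : ∀ i j, 1 ≤ i → i < j → j ≤ rc → V i < V j := by
    intro i j h1 hij hj
    have hBi := hBrun i h1 (le_trans (le_of_lt hij) hj)
    have hBj := hBrun j (by omega) hj
    rw [hV i h1 (by omega), hV j (by omega) hj]
    have hlt : B i < B j := hBmono i j h1 hij hj
    have h1' : rankL L c (B j) = rankL L c (B j - 1) + 1 :=
      rankL_pos_of_c L c hBj.1 hBj.2.2.1
    have h2' : rankL L c (B i) ≤ rankL L c (B j - 1) := rankL_mono L c (by omega)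
    omega
  -- F is downward closed
  have hdc : ∀ j k, j ∈ F → 1 ≤ k → k ≤ j → k ∈ F := by
    intro j k hj hk1 hkj
    simp only [hF, Finset.mem_filter, Finset.mem_Icc] at hj ⊢
    refine ⟨⟨hk1, le_trans hkj hj.1.2⟩, ?_⟩
    rcases eq_or_lt_of_le hkj with rfl | hlt
    · exact hj.2
    · exact le_trans (le_of_lt (hVmono k j hk1 hlt hj.1.2)) hj.2
  -- Icc 1 s ⊆ F
  have hFsub : Finset.Icc 1 s ⊆ F := by
    intro j hj
    rw [Finset.mem_Icc] at hj
    by_contra hjF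
    have hsub : F ⊆ Finset.Icc 1 (j - 1) := by
      intro k hk
      have hk' := hk
      simp only [hF, Finset.mem_filter, Finset.mem_Icc] at hk'
      rw [Finset.mem_Icc]
      refine ⟨hk'.1.1, ?_⟩
      by_contra hkj
      exact hjF (hdc k j hk hj.1 (by omega))
    have hle := Finset.card_le_card hsub
    rw [Nat.card_Icc] at hle
    omega
  -- s ≥ 1: the least occurrence of c is a run start with V-value 1
  have hrank_n : 1 ≤ rankL L c n := le_trans hx1 hxn
  have hs1 : 1 ≤ s := by
    have hne : ((Finset.Icc 1 n).filter (fun j => L j = c)).Nonempty := by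
      rw [← Finset.card_pos]
      exact lt_of_lt_of_le Nat.zero_lt_one hrank_n
    obtain ⟨m0, hm0mem, hm0min'⟩ := Finset.exists_min_image _ id hne
    simp only [Finset.mem_filter, Finset.mem_Icc] at hm0mem
    obtain ⟨⟨hm01, hm02⟩, hm0c⟩ := hm0mem
    have hm0min : ∀ y, 1 ≤ y → y ≤ n → L y = c → m0 ≤ y := by
      intro y h1 h2 h3
      exact hm0min' y (by simp only [Finset.mem_filter, Finset.mem_Icc]; exact ⟨⟨h1, h2⟩, h3⟩)
    have hstart : m0 = 1 ∨ L (m0 - 1) ≠ c := by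
      rcases Nat.eq_or_lt_of_le hm01 with h | h
      · exact Or.inl h.symm
      · refine Or.inr fun hc' => ?_
        have := hm0min (m0 - 1) (by omega) (by omega) hc'
        omega
    obtain ⟨i0, hi01, hi0rc, hBi0⟩ := hBall m0 hm01 hm02 hm0c hstart
    have hzero : rankL L c (m0 - 1) = 0 := by
      have h0 : rankL L c (m0 - 1) = rankL L c 0 := by
        refine rankL_of_no_c L c (Nat.zero_le _) ?_
        intro j hj1 hj2 hjc
        have := hm0min j (by omega) (by omega) hjc
        omega
      rw [h0]; rfl
    have hVi0 : V i0 = 1 := by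
      rw [hV i0 hi01 hi0rc, hBi0, rankL_pos_of_c L c hm01 hm0c, hzero]
    have hi0F : i0 ∈ F := by
      simp only [hF, Finset.mem_filter, Finset.mem_Icc]
      exact ⟨⟨hi01, hi0rc⟩, by omega⟩
    have : 0 < F.card := Finset.card_pos.mpr ⟨i0, hi0F⟩
    omega
  -- s ≤ rc
  have hsrc : s ≤ rc := by
    have h1 : F.card ≤ (Finset.Icc 1 rc).card := by
      rw [hF]; exact Finset.card_le_card (Finset.filter_subset _ _)
    rw [Nat.card_Icc] at h1
    omega
  have hsF : s ∈ F := hFsub (Finset.mem_Icc.mpr ⟨hs1, le_refl s⟩)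
  have hVsx : V s ≤ x := by
    simp only [hF, Finset.mem_filter] at hsF
    exact hsF.2
  have hBs := hBrun s hs1 hsrc
  have hVs_eq : V s = rankL L c (B s) := hV s hs1 hsrc
  have hBs_rank : rankL L c (B s) = rankL L c (B s - 1) + 1 :=
    rankL_pos_of_c L c hBs.1 hBs.2.2.1
  have hVs1 : 1 ≤ V s := by omega
  set p : ℕ := B s + (x - V s) with hp
  -- all positions in [B s, p] carry the character c
  have hfill : ∀ j, B s ≤ j → j ≤ p → L j = c := by
    intro j hj1 hj2
    by_contra hjc
    have hQne : ((Finset.Icc (B s) p).filter (fun k => ¬ (L k = c))).Nonempty :=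
      ⟨j, by simp only [Finset.mem_filter, Finset.mem_Icc]; exact ⟨⟨hj1, hj2⟩, hjc⟩⟩
    obtain ⟨q, hqmem, hqmin'⟩ := Finset.exists_min_image _ id hQne
    simp only [Finset.mem_filter, Finset.mem_Icc] at hqmem
    obtain ⟨⟨hq1, hq2⟩, hqc⟩ := hqmem
    have hqmin : ∀ k, B s ≤ k → k ≤ p → ¬ (L k = c) → q ≤ k := fun k h1 h2 h3 =>
      hqmin' k (by simp only [Finset.mem_filter, Finset.mem_Icc]; exact ⟨⟨h1, h2⟩, h3⟩)
    have hqgt : B s < q := by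
      rcases Nat.eq_or_lt_of_le hq1 with h | h
      · exfalso; apply hqc; rw [← h]; exact hBs.2.2.1
      · exact h
    -- positions in [B s, q-1] are all c
    have hallq : ∀ k, B s - 1 < k → k ≤ q - 1 → L k = c := by
      intro k hk1 hk2
      by_contra hkc
      have := hqmin k (by omega) (by omega) hkc
      omega
    have hrq : rankL L c (q - 1) = rankL L c (B s - 1) + (q - 1 - (B s - 1)) :=
      rankL_of_all_c L c (by omega) hallq
    have hrq' : rankL L c (q - 1) ≤ x - 1 := by omega
    -- there is an occurrence of c in (q-1, n]
    have hq1n : q - 1 ≤ n := by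
      by_contra h
      have := rankL_mono L c (show n ≤ q - 1 by omega)
      omega
    have hsplit := rankL_split L c hq1n
    have hMex : 0 < ((Finset.Ioc (q - 1) n).filter (fun k => L k = c)).card := by omega
    obtain ⟨m, hm⟩ := Finset.card_pos.mp hMex
    simp only [Finset.mem_filter, Finset.mem_Ioc] at hm
    have hMne : ((Finset.Icc q n).filter (fun k => L k = c)).Nonempty :=
      ⟨m, by simp only [Finset.mem_filter, Finset.mem_Icc]; exact ⟨⟨by omega, hm.1.2⟩, hm.2⟩⟩
    obtain ⟨m0, hm0mem, hm0min'⟩ := Finset.exists_min_image _ id hMne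
    simp only [Finset.mem_filter, Finset.mem_Icc] at hm0mem
    obtain ⟨⟨hm01, hm02⟩, hm0c⟩ := hm0mem
    have hm0min : ∀ y, q ≤ y → y ≤ n → L y = c → m0 ≤ y := by
      intro y h1 h2 h3
      exact hm0min' y (by simp only [Finset.mem_filter, Finset.mem_Icc]; exact ⟨⟨h1, h2⟩, h3⟩)
    have hm0q : q < m0 := by
      rcases Nat.eq_or_lt_of_le hm01 with h | h
      · exfalso; apply hqc; rw [h]; exact hm0c
      · exact h
    have hm0start : m0 = 1 ∨ L (m0 - 1) ≠ c := by
      refine Or.inr fun hc' => ?_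
      have := hm0min (m0 - 1) (by omega) (by omega) hc'
      omega
    obtain ⟨i, hi1, hirc, hBi⟩ := hBall m0 (by omega) hm02 hm0c hm0start
    have hsi : s < i := by
      by_contra h
      push_neg at h
      have hBle : B i ≤ B s := by
        rcases Nat.eq_or_lt_of_le h with h' | h'
        · rw [h']
        · exact le_of_lt (hBmono i s hi1 h' hsrc)
      omega
    have hno : rankL L c (m0 - 1) = rankL L c (q - 1) := by
      refine rankL_of_no_c L c (by omega) ?_
      intro k hk1 hk2 hkc
      have := hm0min k (by omega) (by omega) hkc
      omega
    have hVi : V i ≤ x := by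
      rw [hV i hi1 hirc, hBi, rankL_pos_of_c L c (by omega) hm0c, hno]
      omega
    have hiF : i ∈ F := by
      simp only [hF, Finset.mem_filter, Finset.mem_Icc]
      exact ⟨⟨hi1, hirc⟩, hVi⟩
    have hsubF : insert i (Finset.Icc 1 s) ⊆ F := Finset.insert_subset hiF hFsub
    have hle := Finset.card_le_card hsubF
    rw [Finset.card_insert_of_notMem (by rw [Finset.mem_Icc]; omega), Nat.card_Icc] at hle
    omega
  -- rank at p equals x
  have hrp : rankL L c p = x := by
    have h1 := rankL_of_all_c L c (a := B s - 1) (b := p) (by omega)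
      (fun k hk1 hk2 => hfill k (by omega) hk2)
    omega
  -- rank at p - 1 is below x
  have hrp1 : rankL L c (p - 1) < x := by
    have h1 := rankL_le_add L c (a := B s - 1) (b := p - 1) (by omega)
    omega
  -- conclude
  show sInf {j | x ≤ rankL L c j} = p
  have hmem : p ∈ {j | x ≤ rankL L c j} := le_of_eq hrp.symm
  refine le_antisymm (Nat.sInf_le hmem) ?_
  by_contra h
  push_neg at h
  have hspec := Nat.sInf_mem (⟨p, hmem⟩ : Set.Nonempty {j | x ≤ rankL L c j})
  have hle : rankL L c (sInf {j | x ≤ rankL L c j}) ≤ rankL L c (p - 1) :=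
    rankL_mono L c (by omega)
  simp only [Set.mem_setOf_eq] at hspec
  omega
end

section
/- For every character c and every position x ∈ [1..n], with t = pred((B_c[1],…,B_c[run(c)]), x): if t = 0 then L[x] ≠ c; and if t ≥ 1 then L[x] = c if and only if x − B_c[t] + 1 ≤ V_c[t+1] − V_c[t]. -/
section Helpers
variable {α : Type*} [DecidableEq α] (L : ℕ → α) (c : α)

lemma rank_mono {a b : ℕ} (h : a ≤ b) : rankL L c a ≤ rankL L c b :=
  Finset.card_le_card (Finset.filter_subset_filter _ (Finset.Icc_subset_Icc_right h))

lemma rank_split {a b : ℕ} (ha : 1 ≤ a) (h : a ≤ b) :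
    rankL L c b = rankL L c a + ((Finset.Ioc a b).filter (fun j => L j = c)).card := by
  unfold rankL
  have hset : Finset.Icc 1 b = Finset.Icc 1 a ∪ Finset.Ioc a b := by
    ext y; simp only [Finset.mem_Icc, Finset.mem_union, Finset.mem_Ioc]; omega
  rw [hset, Finset.filter_union, Finset.card_union_of_disjoint]
  refine Finset.disjoint_filter_filter ?_
  rw [Finset.disjoint_left]
  intro y hy hy2
  simp only [Finset.mem_Icc, Finset.mem_Ioc] at hy hy2
  omega

lemma rank_const {a k : ℕ} (ha : 1 ≤ a) (h : ∀ y, a < y → y ≤ a + k → L y = c) :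
    rankL L c (a + k) = rankL L c a + k := by
  rw [rank_split L c ha (Nat.le_add_right a k)]
  congr 1
  rw [Finset.filter_true_of_mem, Nat.card_Ioc]; omega
  intro y hy
  simp only [Finset.mem_Ioc] at hy
  exact h y hy.1 hy.2

lemma rank_none {a b : ℕ} (ha : 1 ≤ a) (h : a ≤ b) (h2 : ∀ y, a < y → y ≤ b → L y ≠ c) :
    rankL L c b = rankL L c a := by
  rw [rank_split L c ha h]
  rw [Finset.filter_false_of_mem]; simp
  intro y hy
  simp only [Finset.mem_Ioc] at hy
  exact h2 y hy.1 hy.2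

lemma exists_run_start : ∀ x, 1 ≤ x → L x = c →
    ∃ s, 1 ≤ s ∧ s ≤ x ∧ (∀ y, s ≤ y → y ≤ x → L y = c) ∧ (s = 1 ∨ L (s - 1) ≠ c) := by
  intro x
  induction x using Nat.strong_induction_on with
  | _ x ih =>
    intro hx hc
    by_cases h1 : x = 1
    · subst h1
      exact ⟨1, le_rfl, le_rfl, fun y h1 h2 => by
        have h' : y = 1 := by omega
        subst h'; exact hc,
        Or.inl rfl⟩
    by_cases h2 : L (x - 1) = c
    · obtain ⟨s, hs1, hs2, hs3, hs4⟩ := ih (x - 1) (by omega) (by omega) h2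
      refine ⟨s, hs1, by omega, ?_, hs4⟩
      intro y hy1 hy2
      rcases eq_or_lt_of_le hy2 with h | h
      · rw [h]; exact hc
      · exact hs3 y hy1 (by omega)
    · exact ⟨x, hx, le_rfl, fun y h1' h2' => by
        have h' : y = x := by omega
        subst h'; exact hc,
        Or.inr h2⟩

end Helpers

/-- For every character `c` and every position `x ∈ [1..n]`, with
`t = pred((B_c[1],…,B_c[run(c)]), x)`: if `t = 0` then `L[x] ≠ c`; and if
`t ≥ 1` then `L[x] = c` if and only if `x − B_c[t] + 1 ≤ V_c[t+1] − V_c[t]`. -/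
theorem stmt17 {α : Type*} [DecidableEq α]
    (n : ℕ) (hn : 1 ≤ n) (L : ℕ → α) (c : α)
    -- `B 1 < ⋯ < B rc` are the starting positions of the maximal runs of `c`
    -- in `L[1..n]`
    (rc : ℕ) (B V : ℕ → ℕ)
    (hBmono : ∀ i j, 1 ≤ i → i < j → j ≤ rc → B i < B j)
    (hBrun : ∀ i, 1 ≤ i → i ≤ rc →
      1 ≤ B i ∧ B i ≤ n ∧ L (B i) = c ∧ (B i = 1 ∨ L (B i - 1) ≠ c))
    (hBall : ∀ x, 1 ≤ x → x ≤ n → L x = c → (x = 1 ∨ L (x - 1) ≠ c) →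
      ∃ i, 1 ≤ i ∧ i ≤ rc ∧ B i = x)
    -- `V i = rank(L, c, B i)` and `V (rc+1) = rank(L,c,n) + 1`
    (hV : ∀ i, 1 ≤ i → i ≤ rc → V i = rankL L c (B i))
    (hVend : V (rc + 1) = rankL L c n + 1)
    :
    ∀ x, 1 ≤ x → x ≤ n →
      (predCount B rc x = 0 → L x ≠ c) ∧
      (1 ≤ predCount B rc x →
        (L x = c ↔
          x - B (predCount B rc x) + 1 ≤
            V (predCount B rc x + 1) - V (predCount B rc x))) := by
  intro x hx1 hxn
  set S : Finset ℕ := (Finset.Icc 1 rc).filter (fun i => B i ≤ x) with hSdef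
  have hpc : predCount B rc x = S.card := rfl
  -- B is monotone on [1, rc] (≤ version)
  have hBle : ∀ i j, 1 ≤ i → i ≤ j → j ≤ rc → B i ≤ B j := by
    intro i j h1 h2 h3
    rcases eq_or_lt_of_le h2 with h | h
    · rw [h]
    · exact le_of_lt (hBmono i j h1 h h3)
  constructor
  · -- part 1 : predCount = 0 → L x ≠ c
    intro h0 hc
    have hempty : S = ∅ := Finset.card_eq_zero.mp (hpc ▸ h0)
    obtain ⟨s, hs1, hs2, hs3, hs4⟩ := exists_run_start L c x hx1 hc
    obtain ⟨i, hi1, hi2, hi3⟩ := hBall s hs1 (le_trans hs2 hxn) (hs3 s le_rfl hs2) hs4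
    have : i ∈ S := by
      rw [hSdef, Finset.mem_filter, Finset.mem_Icc]
      exact ⟨⟨hi1, hi2⟩, by rw [hi3]; exact hs2⟩
    rw [hempty] at this
    exact absurd this (Finset.notMem_empty i)
  · -- part 2
    intro ht1
    set t := predCount B rc x with htdef
    have htcard : t = S.card := hpc
    have htrc : t ≤ rc := by
      rw [htcard]
      calc S.card ≤ (Finset.Icc 1 rc).card := Finset.card_filter_le _ _
        _ = rc := by rw [Nat.card_Icc]; omega
    -- S = Icc 1 t
    have hS : ∀ i, i ∈ S ↔ 1 ≤ i ∧ i ≤ t := by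
      intro i
      constructor
      · intro hi
        rw [hSdef, Finset.mem_filter, Finset.mem_Icc] at hi
        obtain ⟨⟨hi1, hi2⟩, hi3⟩ := hi
        refine ⟨hi1, ?_⟩
        have hsub : Finset.Icc 1 i ⊆ S := by
          intro k hk
          rw [Finset.mem_Icc] at hk
          rw [hSdef, Finset.mem_filter, Finset.mem_Icc]
          exact ⟨⟨hk.1, le_trans hk.2 hi2⟩, le_trans (hBle k i hk.1 hk.2 hi2) hi3⟩
        have := Finset.card_le_card hsub
        rw [Nat.card_Icc] at this
        omega
      · rintro ⟨hi1, hi2⟩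
        by_contra hni
        have hBi : ¬ B i ≤ x := by
          intro hBix
          exact hni (by
            rw [hSdef, Finset.mem_filter, Finset.mem_Icc]
            exact ⟨⟨hi1, le_trans hi2 htrc⟩, hBix⟩)
        have hsub : S ⊆ Finset.Icc 1 (i - 1) := by
          intro j hj
          rw [hSdef, Finset.mem_filter, Finset.mem_Icc] at hj
          obtain ⟨⟨hj1, hj2⟩, hj3⟩ := hj
          rw [Finset.mem_Icc]
          refine ⟨hj1, ?_⟩
          by_contra hji
          exact hBi (le_trans (hBle i j hi1 (by omega) hj2) hj3)
        have := Finset.card_le_card hsub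
        rw [Nat.card_Icc] at this
        omega
    have htx : B t ≤ x := ((hS t).mpr ⟨ht1, le_rfl⟩ |> fun h => by
      rw [hSdef, Finset.mem_filter] at h; exact h.2)
    have hnext : t < rc → x < B (t + 1) := by
      intro hlt
      by_contra hge
      have : t + 1 ∈ S := by
        rw [hSdef, Finset.mem_filter, Finset.mem_Icc]
        exact ⟨⟨by omega, by omega⟩, by omega⟩
      have := (hS (t + 1)).mp this
      omega
    obtain ⟨hbt1, hbtn, hbtc, hbts⟩ := hBrun t ht1 htrc
    set bt := B t with hbtdef
    set m : ℕ := if t = rc then n else B (t + 1) - 1 with hmdef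
    have hbtm : bt ≤ m := by
      rw [hmdef]
      split
      · exact hbtn
      · have := hnext (by omega)
        omega
    have hxm : x ≤ m := by
      rw [hmdef]; split
      · exact hxn
      · have := hnext (by omega); omega
    have hmn : m ≤ n := by
      rw [hmdef]; split
      · exact le_rfl
      · rename_i hne
        have := (hBrun (t + 1) (by omega) (by omega)).2.1
        omega
    -- Lemma C : any c in [bt, m] extends the run from bt
    have hrunC : ∀ y, bt ≤ y → y ≤ m → L y = c → ∀ z, bt ≤ z → z ≤ y → L z = c := by
      intro y hy1 hy2 hyc z hz1 hz2
      obtain ⟨s, hs1, hs2, hs3, hs4⟩ := exists_run_start L c y (by omega) hyc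
      obtain ⟨j, hj1, hj2, hj3⟩ := hBall s hs1 (by omega) (hs3 s le_rfl hs2) hs4
      have hjt : j = t := by
        by_contra hne
        rcases lt_or_gt_of_ne hne with h | h
        · -- j < t : run from B j would cover bt - 1
          have hBjbt : B j < bt := hBmono j t hj1 h htrc
          have hbt2 : 2 ≤ bt := by omega
          have : L (bt - 1) = c := by
            apply hs3
            · omega
            · omega
          rcases hbts with h' | h'
          · omega
          · exact h' this
        · -- j > t
          rcases eq_or_lt_of_le htrc with hteq | htlt
          · omega
          · have hBj : B (t + 1) ≤ B j := hBle (t + 1) j (by omega) (by omega) hj2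
            have : ¬ t = rc := by omega
            rw [hmdef, if_neg this] at hy2
            omega
      rw [hjt] at hj3
      have hsbt : s = bt := hj3.symm
      exact hs3 z (by omega) hz2
    set d : ℕ := rankL L c m - rankL L c bt with hddef
    have hrm : rankL L c bt ≤ rankL L c m := rank_mono L c hbtm
    -- d ≤ m - bt
    have hdm : d ≤ m - bt := by
      have := rank_split L c hbt1 hbtm
      have hcard : ((Finset.Ioc bt m).filter (fun j => L j = c)).card ≤ m - bt := by
        calc _ ≤ (Finset.Ioc bt m).card := Finset.card_filter_le _ _
          _ = m - bt := Nat.card_Ioc bt m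
      omega
    -- F2 : the run from bt has length at least d+1
    have hF2 : ∀ k, k ≤ d → L (bt + k) = c := by
      intro k
      induction k using Nat.strong_induction_on with
      | _ k ih =>
        intro hkd
        by_contra hknc
        have hk1 : 1 ≤ k := by
          rcases Nat.eq_zero_or_pos k with h | h
          · rw [h] at hknc; simp only [Nat.add_zero] at hknc; exact absurd hbtc hknc
          · exact h
        have hrun : ∀ y, bt < y → y ≤ bt + (k - 1) → L y = c := by
          intro y hy1 hy2
          have : L (bt + (y - bt)) = c := ih (y - bt) (by omega) (by omega)
          have hyy : bt + (y - bt) = y := by omega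
          rwa [hyy] at this
        have hnone : ∀ y, bt + (k - 1) < y → y ≤ m → L y ≠ c := by
          intro y hy1 hy2 hyc
          have := hrunC y (by omega) hy2 hyc (bt + k) (by omega) (by omega)
          exact hknc this
        have h1 : rankL L c m = rankL L c (bt + (k - 1)) :=
          rank_none L c (by omega) (by omega) hnone
        have h2 : rankL L c (bt + (k - 1)) = rankL L c bt + (k - 1) :=
          rank_const L c hbt1 hrun
        omega
    -- F1 : L x = c → x ≤ bt + d
    have hF1 : L x = c → x ≤ bt + d := by
      intro hc
      have hrun : ∀ y, bt < y → y ≤ bt + (x - bt) → L y = c := by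
        intro y hy1 hy2
        exact hrunC x htx hxm hc y (by omega) (by omega)
      have h2 : rankL L c (bt + (x - bt)) = rankL L c bt + (x - bt) :=
        rank_const L c hbt1 hrun
      have h3 : rankL L c (bt + (x - bt)) ≤ rankL L c m := rank_mono L c (by omega)
      omega
    -- F3 : V (t+1) - V t = d + 1
    have hVt : V t = rankL L c bt := hV t ht1 htrc
    have hVt1 : V (t + 1) = rankL L c m + 1 := by
      rcases eq_or_lt_of_le htrc with hteq | htlt
      · have hmn2 : m = n := by rw [hmdef, if_pos hteq]
        rw [hmn2, hteq, hVend]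
      · have h1 : V (t + 1) = rankL L c (B (t + 1)) := hV (t + 1) (by omega) (by omega)
        have hBt1 := hBrun (t + 1) (by omega) (by omega)
        have hne : ¬ t = rc := by omega
        have hm1 : m + 1 = B (t + 1) := by rw [hmdef, if_neg hne]; omega
        have h2 : rankL L c (m + 1) = rankL L c m + 1 := by
          have : ∀ y, m < y → y ≤ m + 1 → L y = c := by
            intro y hy1 hy2
            have : y = m + 1 := by omega
            rw [this, hm1]
            exact hBt1.2.2.1
          exact rank_const L c (by omega) this
        rw [h1, ← hm1, h2]
    constructor
    · intro hc
      have := hF1 hc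
      omega
    · intro hle
      rw [hVt, hVt1] at hle
      have hxd : x ≤ bt + d := by omega
      have := hF2 (x - bt) (by omega)
      have hxx : bt + (x - bt) = x := by omega
      rwa [hxx] at this
end
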